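/- Let μ be a nontrivial probability measure on the unit circle with orthonormal polynomials φ_n, and fix n ≥ 1. Then all n zeros ζ_1, …, ζ_n of φ_n (counted with multiplicity) lie in the open unit disk 𝔻, and one has ‖φ_n'/n‖²_{L²(dμ)} = (1/n²)·Σ_{j=1}^n Σ_{k=1}^n 1/(1 − conj(ζ_j)·ζ_k) = 1 + Σ_{m=1}^∞ |∫ z^m dν_n(z)|², where dν_n = (1/n)·Σ_{j=1}^n δ_{ζ_j} is the normalized zero counting measure of φ_n. -/

import Mathlib

open MeasureTheory Polynomial Filter Topology ComplexConjugate

noncomputable section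

/-- The reversed (Szegő `*`-transformed) polynomial of a degree-`n` polynomial:
`P*(z) = z^n conj(P(1/conj z))`, i.e. the coefficients are conjugated and reversed. -/
def starPoly (n : ℕ) (P : Polynomial ℂ) : Polynomial ℂ :=
  (P.map (starRingEnd ℂ)).reflect n

/-- The `L²(dμ)` norm of a polynomial. -/
def l2norm (μ : Measure ℂ) (P : Polynomial ℂ) : ℝ :=
  (∫ z, ‖P.eval z‖ ^ 2 ∂μ) ^ (1 / 2 : ℝ)

/-- `φ` is the sequence of orthonormal polynomials for the measure `μ`:
`φ n` has degree `n`, a positive (real) leading coefficient, and the family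
is orthonormal in `L²(dμ)`. -/
structure IsOPUC (μ : Measure ℂ) (φ : ℕ → Polynomial ℂ) : Prop where
  deg : ∀ n : ℕ, (φ n).degree = n
  lead_re_pos : ∀ n : ℕ, 0 < ((φ n).leadingCoeff).re
  lead_im_zero : ∀ n : ℕ, ((φ n).leadingCoeff).im = 0
  orth : ∀ m n : ℕ,
    ∫ z, conj ((φ m).eval z) * (φ n).eval z ∂μ = if m = n then 1 else 0

/-- The monic orthogonal polynomials `Φ_n` associated to the orthonormal ones. -/
def monicOP (φ : ℕ → Polynomial ℂ) (n : ℕ) : Polynomial ℂ :=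
  Polynomial.C ((φ n).leadingCoeff)⁻¹ * φ n

/-- The Verblunsky coefficients `α_n = -conj (Φ_{n+1}(0))`. -/
def verblunsky (φ : ℕ → Polynomial ℂ) (n : ℕ) : ℂ :=
  -conj ((monicOP φ (n + 1)).eval 0)

/-- The measure lives on the unit circle `∂𝔻`. -/
def OnCircle (μ : Measure ℂ) : Prop := μ (Metric.sphere (0 : ℂ) 1)ᶜ = 0

/-- The measure is nontrivial: it is not supported on any finite set
(equivalently, its support is infinite). -/
def NontrivialSupport (μ : Measure ℂ) : Prop :=
  ∀ s : Finset ℂ, μ ((↑s : Set ℂ))ᶜ ≠ 0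

/-- `μ` has normal `L²`-derivative behavior: `‖φ_n'‖_{L²(dμ)} / n → 1`. -/
def NormalBehavior (μ : Measure ℂ) (φ : ℕ → Polynomial ℂ) : Prop :=
  Tendsto (fun n : ℕ => l2norm μ (derivative (φ n)) / n) atTop (𝓝 1)

/-!
Write `φ_n = κ ∏ (z - ζ_j)` and `Q_j = φ_n / (z - ζ_j)`, so that `φ_n' = ∑_j Q_j`. Since `z̄ z = 1`
on the support of `μ`, there `(1 - ζ̄_j ζ_k) Q̄_j Q_k = \overline{z Q_j} φ_n + ζ_k φ̄_n Q_k`; as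
`φ_n` is a unit vector orthogonal to the polynomials of degree `< n`, integrating gives
`(1 - ζ̄_j ζ_k) ⟨Q_j, Q_k⟩ = 1`. The diagonal case `j = k` forces `|ζ_j| < 1`, summing over `j, k`
gives the first formula, and expanding each `(1 - ζ̄_j ζ_k)⁻¹` as a geometric series gives the
second.
-/

section Circle

variable {μ : Measure ℂ}

theorem OnCircle.ae_norm_eq_one (hcirc : OnCircle μ) : ∀ᵐ z ∂μ, ‖z‖ = 1 := by
  filter_upwards [measure_eq_zero_iff_ae_notMem.mp hcirc] with z hz
  simpa using hz

theorem OnCircle.integrable_of_continuous [IsFiniteMeasure μ] (hcirc : OnCircle μ)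
    {E : Type*} [NormedAddCommGroup E] {f : ℂ → E} (hf : Continuous f) : Integrable f μ := by
  have hae : ∀ᵐ z ∂μ, z ∈ Metric.sphere (0 : ℂ) 1 := by
    filter_upwards [hcirc.ae_norm_eq_one] with z hz
    simpa using hz
  rw [← Measure.restrict_eq_self_of_ae_mem hae]
  exact hf.continuousOn.integrableOn_compact (isCompact_sphere 0 1)

end Circle

def polyInner (μ : Measure ℂ) (P Q : ℂ[X]) : ℂ :=
  ∫ z, conj (P.eval z) * Q.eval z ∂μ

section PolyInner

variable {μ : Measure ℂ}

theorem OnCircle.integrable_polyInner [IsFiniteMeasure μ] (hcirc : OnCircle μ) (P Q : ℂ[X]) :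
    Integrable (fun z => conj (P.eval z) * Q.eval z) μ :=
  hcirc.integrable_of_continuous <| (Complex.continuous_conj.comp P.continuous).mul Q.continuous

theorem polyInner_conj_symm (P Q : ℂ[X]) : polyInner μ P Q = conj (polyInner μ Q P) := by
  simp only [polyInner, ← integral_conj, map_mul, Complex.conj_conj, mul_comm]

theorem polyInner_C_mul_right (P Q : ℂ[X]) (c : ℂ) :
    polyInner μ P (C c * Q) = c * polyInner μ P Q := by
  simp only [polyInner, ← integral_const_mul, eval_mul, eval_C, mul_left_comm]

theorem polyInner_add_right [IsFiniteMeasure μ] (hcirc : OnCircle μ) (P Q R : ℂ[X]) :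
    polyInner μ P (Q + R) = polyInner μ P Q + polyInner μ P R := by
  simp only [polyInner, eval_add, mul_add]
  exact integral_add (hcirc.integrable_polyInner P Q) (hcirc.integrable_polyInner P R)

theorem polyInner_sum_sum [IsFiniteMeasure μ] (hcirc : OnCircle μ) {ι κ : Type*}
    (s : Finset ι) (t : Finset κ) (P : ι → ℂ[X]) (Q : κ → ℂ[X]) :
    polyInner μ (∑ j ∈ s, P j) (∑ k ∈ t, Q k) = ∑ j ∈ s, ∑ k ∈ t, polyInner μ (P j) (Q k) := by
  simp only [polyInner, eval_finsetSum, map_sum, Finset.sum_mul_sum]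
  rw [integral_finsetSum _ fun j _ => integrable_finsetSum _ fun k _ =>
    hcirc.integrable_polyInner (P j) (Q k)]
  exact Finset.sum_congr rfl fun j _ => integral_finsetSum _ fun k _ =>
    hcirc.integrable_polyInner (P j) (Q k)

theorem polyInner_self (P : ℂ[X]) :
    polyInner μ P P = ((∫ z, ‖P.eval z‖ ^ 2 ∂μ : ℝ) : ℂ) := by
  simp only [polyInner, Complex.conj_mul', ← Complex.ofReal_pow]
  exact integral_ofReal

theorem l2norm_sq (P : ℂ[X]) : l2norm μ P ^ 2 = ∫ z, ‖P.eval z‖ ^ 2 ∂μ := by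
  rw [l2norm, ← Real.sqrt_eq_rpow, Real.sq_sqrt (integral_nonneg fun z => by positivity)]

theorem one_sub_conj_mul_mul_polyInner_eq_one [IsFiniteMeasure μ] (hcirc : OnCircle μ)
    {F P Q : ℂ[X]} {a b : ℂ} (hP : F = (X - C a) * P) (hQ : F = (X - C b) * Q)
    (hFF : polyInner μ F F = 1) (hFP : polyInner μ F P = 0) (hFQ : polyInner μ F Q = 0) :
    (1 - conj a * b) * polyInner μ P Q = 1 := by
  have hXP : polyInner μ (X * P) F = 1 := by
    have : X * P = F + C a * P := by rw [hP]; ring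
    rw [polyInner_conj_symm, this, polyInner_add_right hcirc, polyInner_C_mul_right, hFF, hFP]
    simp
  calc (1 - conj a * b) * polyInner μ P Q
      = polyInner μ (X * P) F + b * polyInner μ F Q := by
        simp only [polyInner, ← integral_const_mul]
        rw [← integral_add (hcirc.integrable_polyInner _ _)
          ((hcirc.integrable_polyInner _ _).const_mul b)]
        refine integral_congr_ae ?_
        filter_upwards [hcirc.ae_norm_eq_one] with z hz
        have hz1 : conj z * z = 1 := by simp [Complex.conj_mul', hz]
        have eP : F.eval z = (z - a) * P.eval z := by simp [hP]
        have eQ : F.eval z = (z - b) * Q.eval z := by simp [hQ]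
        have eP' := congrArg conj eP
        simp only [map_mul, map_sub] at eP'
        simp only [eval_mul, eval_X, map_mul]
        linear_combination (-(conj (P.eval z) * Q.eval z)) * hz1 - conj z * conj (P.eval z) * eQ
          - b * Q.eval z * eP'
    _ = 1 := by rw [hXP, hFQ, mul_zero, add_zero]

end PolyInner

namespace IsOPUC

variable {μ : Measure ℂ} {φ : ℕ → ℂ[X]}

theorem natDegree_eq (hφ : IsOPUC μ φ) (n : ℕ) : (φ n).natDegree = n :=
  natDegree_eq_of_degree_eq_some (hφ.deg n)

theorem ne_zero (hφ : IsOPUC μ φ) (n : ℕ) : φ n ≠ 0 := by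
  intro h
  simpa [h] using hφ.deg n

theorem polyInner_eq (hφ : IsOPUC μ φ) (m n : ℕ) :
    polyInner μ (φ m) (φ n) = if m = n then 1 else 0 :=
  hφ.orth m n

/-- Induction on `deg P`: subtracting the right multiple of `φ (natDegree P)` lowers it. -/
theorem polyInner_eq_zero_of_degree_lt [IsFiniteMeasure μ] (hφ : IsOPUC μ φ)
    (hcirc : OnCircle μ) {n : ℕ} (P : ℂ[X]) (hP : P.degree < n) : polyInner μ (φ n) P = 0 := by
  induction hd : P.degree using WellFoundedLT.induction generalizing P with
  | ind d ih =>
  subst hd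
  rcases eq_or_ne P 0 with rfl | hP0
  · simp [polyInner]
  set m := P.natDegree
  set c := P.leadingCoeff / (φ m).leadingCoeff
  have hφm : (φ m).leadingCoeff ≠ 0 := leadingCoeff_ne_zero.mpr (hφ.ne_zero m)
  have hc : c ≠ 0 := div_ne_zero (leadingCoeff_ne_zero.mpr hP0) hφm
  have hlt : (P - C c * φ m).degree < P.degree := by
    refine degree_sub_lt_left ?_ hP0 ?_
    · rw [degree_C_mul hc, hφ.deg m, degree_eq_natDegree hP0]
    · rw [leadingCoeff_C_mul_of_isUnit hc.isUnit, div_mul_cancel₀ _ hφm]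
  have hm : m ≠ n := by
    rintro rfl
    exact (degree_eq_natDegree hP0 ▸ hP).false
  calc polyInner μ (φ n) P
      = polyInner μ (φ n) (P - C c * φ m) + c * polyInner μ (φ n) (φ m) := by
        rw [← polyInner_C_mul_right, ← polyInner_add_right hcirc, sub_add_cancel]
    _ = 0 := by
        rw [ih _ hlt _ (hlt.trans hP) rfl, hφ.polyInner_eq, if_neg (Ne.symm hm), mul_zero, add_zero]

theorem degree_lt_of_eq_X_sub_C_mul (hφ : IsOPUC μ φ) {n : ℕ} {a : ℂ} {P : ℂ[X]}
    (h : φ n = (X - C a) * P) : P.degree < n := by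
  have hP0 : P ≠ 0 := by
    rintro rfl
    exact hφ.ne_zero n (by simpa using h)
  have hnat := congrArg natDegree h
  rw [hφ.natDegree_eq, natDegree_mul (X_sub_C_ne_zero a) hP0, natDegree_X_sub_C] at hnat
  exact degree_le_natDegree.trans_lt (by exact_mod_cast (by omega : P.natDegree < n))

theorem one_sub_conj_mul_mul_polyInner_eq_one [IsFiniteMeasure μ] (hφ : IsOPUC μ φ)
    (hcirc : OnCircle μ) {n : ℕ} {a b : ℂ} {P Q : ℂ[X]}
    (hP : φ n = (X - C a) * P) (hQ : φ n = (X - C b) * Q) :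
    (1 - conj a * b) * polyInner μ P Q = 1 :=
  _root_.one_sub_conj_mul_mul_polyInner_eq_one hcirc hP hQ (by simp [hφ.polyInner_eq])
    (hφ.polyInner_eq_zero_of_degree_lt hcirc P (hφ.degree_lt_of_eq_X_sub_C_mul hP))
    (hφ.polyInner_eq_zero_of_degree_lt hcirc Q (hφ.degree_lt_of_eq_X_sub_C_mul hQ))

theorem norm_lt_one_of_isRoot [IsFiniteMeasure μ] (hφ : IsOPUC μ φ) (hcirc : OnCircle μ)
    {n : ℕ} {a : ℂ} (ha : (φ n).IsRoot a) : ‖a‖ < 1 := by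
  set P := φ n /ₘ (X - C a)
  have h := hφ.one_sub_conj_mul_mul_polyInner_eq_one hcirc
    (mul_divByMonic_eq_iff_isRoot.mpr ha).symm (mul_divByMonic_eq_iff_isRoot.mpr ha).symm
  rw [Complex.conj_mul', polyInner_self] at h
  have h' : (1 - ‖a‖ ^ 2) * ∫ z, ‖P.eval z‖ ^ 2 ∂μ = 1 := by exact_mod_cast h
  have hpos : 0 < 1 - ‖a‖ ^ 2 :=
    pos_of_mul_pos_left (h'.symm ▸ one_pos) (integral_nonneg fun z => by positivity)
  nlinarith [norm_nonneg a]

end IsOPUC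

theorem exists_eq_C_leadingCoeff_mul_prod_X_sub_C (p : ℂ[X]) :
    ∃ ζ : Fin p.natDegree → ℂ, p = C p.leadingCoeff * ∏ j, (X - C (ζ j)) := by
  obtain ⟨l, hl, hlen⟩ : ∃ l : List ℂ, (l : Multiset ℂ) = p.roots ∧ l.length = p.natDegree :=
    ⟨p.roots.toList, p.roots.coe_toList,
      by rw [Multiset.length_toList, (IsAlgClosed.splits p).natDegree_eq_card_roots]⟩
  have hprod := C_leadingCoeff_mul_prod_multiset_X_sub_C
    (IsAlgClosed.splits p).natDegree_eq_card_roots.symm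
  rw [← hlen]
  refine ⟨fun j => l[j.1], ?_⟩
  rw [Fin.prod_univ_fun_getElem l (fun a => X - C a), ← Multiset.prod_coe, ← Multiset.map_coe, hl,
    hprod]

section PowerSums

variable {ι : Type*} [Fintype ι]

theorem hasSum_norm_sq_sum_pow (ζ : ι → ℂ) (hζ : ∀ j, ‖ζ j‖ < 1) :
    HasSum (fun m : ℕ => ((‖∑ j, ζ j ^ m‖ ^ 2 : ℝ) : ℂ))
      (∑ j, ∑ k, (1 - conj (ζ j) * ζ k)⁻¹) := by
  have hgeom : ∀ j k, HasSum (fun m : ℕ => (conj (ζ j) * ζ k) ^ m) (1 - conj (ζ j) * ζ k)⁻¹ :=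
    fun j k => hasSum_geometric_of_norm_lt_one <| by
      rw [norm_mul, Complex.norm_conj]
      exact mul_lt_one_of_nonneg_of_lt_one_left (norm_nonneg _) (hζ j) (hζ k).le
  convert hasSum_sum fun j _ => hasSum_sum fun k _ => hgeom j k using 2 with m
  rw [Complex.ofReal_pow, ← Complex.conj_mul', map_sum, Finset.sum_mul_sum]
  simp only [map_pow, mul_pow]

theorem div_card_sq_eq_one_add_tsum [Nonempty ι] (ζ : ι → ℂ) (hζ : ∀ j, ‖ζ j‖ < 1) {A : ℝ}
    (hA : (A : ℂ) = ∑ j, ∑ k, (1 - conj (ζ j) * ζ k)⁻¹) :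
    A / Fintype.card ι ^ 2 = 1 + ∑' m : ℕ, ‖(Fintype.card ι : ℂ)⁻¹ * ∑ j, ζ j ^ (m + 1)‖ ^ 2 := by
  have hsum : HasSum (fun m : ℕ => ‖∑ j, ζ j ^ m‖ ^ 2) A := by
    rw [← Complex.hasSum_ofReal, hA]
    exact hasSum_norm_sq_sum_pow ζ hζ
  have htail := ((hasSum_nat_add_iff' 1).mpr hsum).div_const (Fintype.card ι ^ 2 : ℝ)
  have hterm : ∀ m : ℕ, ‖(Fintype.card ι : ℂ)⁻¹ * ∑ j, ζ j ^ (m + 1)‖ ^ 2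
      = ‖∑ j, ζ j ^ (m + 1)‖ ^ 2 / Fintype.card ι ^ 2 := fun m => by
    rw [norm_mul, norm_inv, Complex.norm_natCast, mul_pow, inv_pow, inv_mul_eq_div]
  simp_rw [hterm, htail.tsum_eq]
  simp only [Finset.sum_range_one, pow_zero, Finset.sum_const, Finset.card_univ, nsmul_eq_mul,
    mul_one, Complex.norm_natCast]
  field_simp
  ring

end PowerSums

theorem stmt3_general (μ : Measure ℂ) [IsProbabilityMeasure μ] (hcirc : OnCircle μ)
    (φ : ℕ → Polynomial ℂ) (hφ : IsOPUC μ φ)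
    (n : ℕ) (hn : 1 ≤ n) :
    ∃ ζ : Fin n → ℂ,
      (∀ j, ‖ζ j‖ < 1) ∧
      φ n = Polynomial.C ((φ n).leadingCoeff) * ∏ j, (X - Polynomial.C (ζ j)) ∧
      ((l2norm μ (derivative (φ n)) / n) ^ 2 : ℂ)
        = ((n : ℂ) ^ 2)⁻¹ * ∑ j, ∑ k, (1 - conj (ζ j) * ζ k)⁻¹ ∧
      (l2norm μ (derivative (φ n)) / n) ^ 2
        = 1 + ∑' m : ℕ, ‖(n : ℂ)⁻¹ * ∑ j, ζ j ^ (m + 1)‖ ^ 2 := by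
  classical
  obtain ⟨ζ, hfac⟩ := hφ.natDegree_eq n ▸ exists_eq_C_leadingCoeff_mul_prod_X_sub_C (φ n)
  set Q : Fin n → ℂ[X] := fun j => C (φ n).leadingCoeff * ∏ i ∈ Finset.univ.erase j, (X - C (ζ i))
  have hfacQ : ∀ j, φ n = (X - C (ζ j)) * Q j := fun j => by
    rw [hfac, ← Finset.mul_prod_erase Finset.univ _ (Finset.mem_univ j)]
    ring
  have hζ : ∀ j, ‖ζ j‖ < 1 := fun j =>
    hφ.norm_lt_one_of_isRoot (n := n) hcirc (by rw [IsRoot.def, hfacQ j]; simp)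
  have hQQ : ∀ j k, polyInner μ (Q j) (Q k) = (1 - conj (ζ j) * ζ k)⁻¹ := fun j k =>
    eq_inv_of_mul_eq_one_right (hφ.one_sub_conj_mul_mul_polyInner_eq_one hcirc (hfacQ j) (hfacQ k))
  have hder : derivative (φ n) = ∑ j, Q j := by
    rw [hfac, derivative_C_mul, derivative_prod_finset, Finset.mul_sum]
    simp [Q]
  have hA : ((l2norm μ (derivative (φ n)) ^ 2 : ℝ) : ℂ) = ∑ j, ∑ k, (1 - conj (ζ j) * ζ k)⁻¹ := by
    rw [l2norm_sq, ← polyInner_self, hder, polyInner_sum_sum hcirc]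
    simp only [hQQ]
  have : NeZero n := ⟨by omega⟩
  refine ⟨ζ, hζ, hfac, ?_, ?_⟩
  · rw [div_pow, ← Complex.ofReal_pow, hA, div_eq_inv_mul]
  · simpa [div_pow] using div_card_sq_eq_one_add_tsum ζ hζ hA

/-- The zeros `ζ_1, …, ζ_n` of `φ_n` all lie in the open unit disk and
`‖φ_n'/n‖² = (1/n²) Σ_{j,k} 1/(1 − conj(ζ_j) ζ_k) = 1 + Σ_{m≥1} |∫ z^m dν_n|²`,
where `ν_n` is the normalized zero counting measure. -/
theorem stmt3 (μ : Measure ℂ) [IsProbabilityMeasure μ] (hcirc : OnCircle μ)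
    (hnt : NontrivialSupport μ) (φ : ℕ → Polynomial ℂ) (hφ : IsOPUC μ φ)
    (n : ℕ) (hn : 1 ≤ n) :
    ∃ ζ : Fin n → ℂ,
      (∀ j, ‖ζ j‖ < 1) ∧
      φ n = Polynomial.C ((φ n).leadingCoeff) * ∏ j, (X - Polynomial.C (ζ j)) ∧
      ((l2norm μ (derivative (φ n)) / n) ^ 2 : ℂ)
        = ((n : ℂ) ^ 2)⁻¹ * ∑ j, ∑ k, (1 - conj (ζ j) * ζ k)⁻¹ ∧
      (l2norm μ (derivative (φ n)) / n) ^ 2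
        = 1 + ∑' m : ℕ, ‖(n : ℂ)⁻¹ * ∑ j, ζ j ^ (m + 1)‖ ^ 2 :=
  stmt3_general μ hcirc φ hφ n hn
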